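/- Let $d \geq 2$, let $\nu = (p_1/q, \ldots, p_d/q)^T$ with positive integers $p_i < q$ and $\gcd(p_1,\ldots,p_d,q)=1$, and let $L_\nu = \mathbb{Z}^d + \mathbb{Z}\nu$. Define $N(x) = \|(x_1, \ldots, x_{d-1}, 1 - x_d)\|$. Then there exists an integer $t$ with $1 \leq t \leq q-1$ such that $\xi = t\nu \bmod 1$ satisfies $N(\xi) \leq (1 + \sqrt{d}) \tau(L_\nu)$; moreover if $\tau(L_\nu) < 1/2$ then $t$ can be chosen with $\{t p_d/q\} > 0$. -/

import Mathlib

/-- The set `L_ν = ℤ^d + ℤν`. -/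
def latticeNu (d : ℕ) (ν : EuclideanSpace ℝ (Fin d)) : Set (EuclideanSpace ℝ (Fin d)) :=
  {x | ∃ (z : Fin d → ℤ) (t : ℤ), ∀ i, x i = (z i : ℝ) + (t : ℝ) * ν i}

/-- The covering radius of a subset `L ⊆ ℝ^d` (Euclidean norm). -/
noncomputable def covRad (d : ℕ) (L : Set (EuclideanSpace ℝ (Fin d))) : ℝ :=
  sInf {σ : ℝ | 0 < σ ∧ ∀ x : EuclideanSpace ℝ (Fin d), ∃ y ∈ L, dist x y ≤ σ}

/-- `N(x) = ‖(x_1,…,x_{d-1}, 1 - x_d)‖`. -/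
noncomputable def NFn (d : ℕ) (hd : 0 < d) (x : EuclideanSpace ℝ (Fin d)) : ℝ :=
  Real.sqrt ((∑ i ∈ Finset.univ.filter (fun i : Fin d => (i : ℕ) < d - 1), (x i) ^ 2) +
    (1 - x ⟨d - 1, Nat.sub_lt hd one_pos⟩) ^ 2)

/-!
Write `e` for the last unit vector, so that `N(x) = ‖x - e‖`; the points of `L_ν` in `[0,1)^d`
are exactly the `tν mod 1` with `0 ≤ t < q`. For `σ > τ(L_ν)` every point of space lies within `σ`
of `L_ν`. If `σ < 1/2`, the lattice point near `(σ, …, σ, 1 - σ)` lies in `(0,1)^d`, so it is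
`tν mod 1` for some `t ≠ 0` with positive last coordinate, and it is within `σ + √d σ` of `e`.
If `σ ≥ 1/2`, the lattice point `y` near the centre of the cube gives `ξ = y mod 1` with
`|ξ_i - e_i| ≤ 1/2 + |y_i - 1/2|`, hence `N(ξ) ≤ √d/2 + σ`; should `y` be integral, then
`σ > √d/2` and `t = 1` already works. As only finitely many `t` are involved, letting `σ ↓ τ`
gives the bounds at `τ` itself.
-/

open Filter Topology Set

namespace EuclideanSpace

variable {ι : Type*} [Fintype ι]

theorem norm_le_norm_of_forall_abs_le {x y : EuclideanSpace ℝ ι} (h : ∀ i, |x i| ≤ |y i|) :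
    ‖x‖ ≤ ‖y‖ := by
  rw [EuclideanSpace.norm_eq, EuclideanSpace.norm_eq]
  gcongr with i
  exact h i

theorem norm_const (a : ℝ) :
    ‖(WithLp.toLp 2 fun _ : ι => a : EuclideanSpace ℝ ι)‖ = √(Fintype.card ι) * |a| := by
  simp [EuclideanSpace.norm_eq, Real.sqrt_mul, Real.sqrt_sq_eq_abs]

end EuclideanSpace

theorem Finset.exists_le_of_tendsto {ι α β : Type*} [LinearOrder α] [TopologicalSpace α]
    [ClosedIciTopology α] {l : Filter β} [l.NeBot] {s : Finset ι} {f : ι → α} {g : β → α} {b : α}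
    (hg : Tendsto g l (𝓝 b)) (h : ∀ᶠ x in l, ∃ i ∈ s, f i ≤ g x) : ∃ i ∈ s, f i ≤ b := by
  by_contra! hlt
  have hev : ∀ᶠ x in l, ∀ i ∈ s, g x < f i :=
    (eventually_all_finset s).2 fun i hi => hg.eventually_lt_const (hlt i hi)
  obtain ⟨x, ⟨i, hi, hle⟩, hgt⟩ := (h.and hev).exists
  exact (hgt i hi).not_ge hle

theorem abs_fract_sub_le (u : ℝ) {e : ℝ} (he : e ∈ Icc 0 1) :
    |Int.fract u - e| ≤ 1 / 2 + |u - 1 / 2| := by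
  obtain ⟨he0, he1⟩ := he
  by_cases hu : u ∈ Ico 0 1
  · rw [Int.fract_eq_self.2 hu]
    have : |1 / 2 - e| ≤ 1 / 2 := abs_le.2 ⟨by linarith, by linarith⟩
    calc |u - e| ≤ |u - 1 / 2| + |1 / 2 - e| := abs_sub_le _ _ _
      _ ≤ 1 / 2 + |u - 1 / 2| := by linarith
  · have hfar : 1 / 2 ≤ |u - 1 / 2| := by
      rw [mem_Ico, not_and_or, not_le, not_lt] at hu
      rcases hu with hu | hu
      · rw [abs_of_neg (by linarith)]; linarith
      · rw [abs_of_nonneg (by linarith)]; linarith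
    have := Int.fract_nonneg u
    have := Int.fract_lt_one u
    have : |Int.fract u - e| ≤ 1 := abs_le.2 ⟨by linarith, by linarith⟩
    linarith

noncomputable def fractVec {ι : Type*} (x : EuclideanSpace ℝ ι) : EuclideanSpace ℝ ι :=
  WithLp.toLp 2 fun i => Int.fract (x i)

section fractVec

variable {ι : Type*} [Fintype ι]

theorem dist_fractVec_le (y : EuclideanSpace ℝ ι) {e : EuclideanSpace ℝ ι}
    (he : ∀ i, e i ∈ Icc 0 1) :
    dist (fractVec y) e ≤ √(Fintype.card ι) / 2 + dist y (WithLp.toLp 2 fun _ => 1 / 2) := by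
  set c : EuclideanSpace ℝ ι := WithLp.toLp 2 fun _ => 1 / 2
  set v : EuclideanSpace ℝ ι := WithLp.toLp 2 fun i => |y i - 1 / 2|
  calc dist (fractVec y) e = ‖fractVec y - e‖ := dist_eq_norm _ _
    _ ≤ ‖c + v‖ := EuclideanSpace.norm_le_norm_of_forall_abs_le fun i =>
        (abs_fract_sub_le (y i) (he i)).trans (le_abs_self _)
    _ ≤ ‖c‖ + ‖v‖ := norm_add_le c v
    _ ≤ √(Fintype.card ι) / 2 + dist y c := by
        gcongr
        · simp [c, EuclideanSpace.norm_const, div_eq_mul_inv]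
        · rw [dist_eq_norm]
          exact EuclideanSpace.norm_le_norm_of_forall_abs_le fun i => by simp [v, c]

theorem dist_fractVec_le_sqrt_card (y : EuclideanSpace ℝ ι) {e : EuclideanSpace ℝ ι}
    (he : ∀ i, e i ∈ Icc 0 1) : dist (fractVec y) e ≤ √(Fintype.card ι) := by
  calc dist (fractVec y) e ≤ ‖(WithLp.toLp 2 fun _ => 1 : EuclideanSpace ℝ ι)‖ := by
        rw [dist_eq_norm]
        refine EuclideanSpace.norm_le_norm_of_forall_abs_le fun i => ?_
        have h0 := Int.fract_nonneg (y i)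
        have h1 := Int.fract_lt_one (y i)
        have ⟨he0, he1⟩ := he i
        simp only [fractVec, PiLp.sub_apply, abs_one, abs_le]
        constructor <;> linarith
    _ = √(Fintype.card ι) := by simp [EuclideanSpace.norm_const]

end fractVec

theorem fract_emod_mul_div (q : ℕ) (m t : ℤ) :
    Int.fract (((t % q : ℤ) : ℝ) * ((m : ℝ) / q)) = Int.fract ((t : ℝ) * ((m : ℝ) / q)) := by
  rcases eq_or_ne q 0 with rfl | hq
  · simp
  have hsplit : (t : ℝ) * (m / q) = ((t / q * m : ℤ) : ℝ) + ((t % q : ℤ) : ℝ) * (m / q) := by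
    have := congrArg (Int.cast : ℤ → ℝ) (Int.mul_ediv_add_emod t q)
    push_cast at this ⊢
    field_simp
    linear_combination (m : ℝ) * this.symm
  rw [hsplit, Int.fract_intCast_add]

section latticeNu

variable {d : ℕ}

theorem exists_mem_latticeNu_dist_le (ν x : EuclideanSpace ℝ (Fin d)) :
    ∃ y ∈ latticeNu d ν, dist x y ≤ √d / 2 := by
  refine ⟨WithLp.toLp 2 fun i => (round (x i) : ℝ), ⟨fun i => round (x i), 0, fun i => by simp⟩, ?_⟩
  calc dist x _ ≤ ‖(WithLp.toLp 2 fun _ => 1 / 2 : EuclideanSpace ℝ (Fin d))‖ := by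
        rw [dist_eq_norm]
        refine EuclideanSpace.norm_le_norm_of_forall_abs_le fun i => ?_
        simpa using abs_sub_round (x i)
    _ = √d / 2 := by simp [EuclideanSpace.norm_const, div_eq_mul_inv]

theorem exists_fractVec_eq_of_mem_latticeNu {p : Fin d → ℕ} {q : ℕ} (hq : 0 < q)
    {ν : EuclideanSpace ℝ (Fin d)} (hν : ∀ i, ν i = p i / q) {y : EuclideanSpace ℝ (Fin d)}
    (hy : y ∈ latticeNu d ν) : ∃ t < q, fractVec ((t : ℝ) • ν) = fractVec y := by
  obtain ⟨z, t, hz⟩ := hy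
  have hlt := Int.emod_lt_of_pos t (by omega : (0 : ℤ) < q)
  refine ⟨(t % q).toNat, by omega, ?_⟩
  ext i
  have hcast : (((t % q).toNat : ℕ) : ℝ) = ((t % q : ℤ) : ℝ) := by
    exact_mod_cast Int.toNat_of_nonneg (Int.emod_nonneg t (by omega))
  simpa [fractVec, hz i, hν i, hcast, Int.fract_intCast_add] using
    fract_emod_mul_div q (p i) t

end latticeNu

theorem exists_dist_lt_of_covRad_lt {d : ℕ} {L : Set (EuclideanSpace ℝ (Fin d))} {R : ℝ}
    (hR : 0 < R) (hL : ∀ x, ∃ y ∈ L, dist x y ≤ R) {σ : ℝ} (hσ : covRad d L < σ)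
    (x : EuclideanSpace ℝ (Fin d)) : ∃ y ∈ L, dist x y < σ := by
  obtain ⟨s, ⟨-, hs⟩, hsσ⟩ := exists_lt_of_csInf_lt
    (s := {σ : ℝ | 0 < σ ∧ ∀ x, ∃ y ∈ L, dist x y ≤ σ}) ⟨R, hR, hL⟩ hσ
  obtain ⟨y, hyL, hy⟩ := hs x
  exact ⟨y, hyL, hy.trans_lt hsσ⟩

noncomputable def lastBasisVector {d : ℕ} (hd : 0 < d) : EuclideanSpace ℝ (Fin d) :=
  EuclideanSpace.single ⟨d - 1, Nat.sub_lt hd one_pos⟩ 1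

theorem NFn_eq_dist {d : ℕ} (hd : 0 < d) (x : EuclideanSpace ℝ (Fin d)) :
    NFn d hd x = dist x (lastBasisVector hd) := by
  unfold lastBasisVector
  set last : Fin d := ⟨d - 1, Nat.sub_lt hd one_pos⟩
  have herase : Finset.univ.erase last = Finset.univ.filter (fun i : Fin d => (i : ℕ) < d - 1) := by
    ext i
    simp only [Finset.mem_erase, Finset.mem_filter, Finset.mem_univ, and_true, true_and, ne_eq,
      Fin.ext_iff, last]
    omega
  rw [NFn, EuclideanSpace.dist_eq, ← Finset.add_sum_erase Finset.univ _ (Finset.mem_univ last),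
    herase, add_comm]
  congr 2
  · rw [PiLp.single_apply, if_pos rfl, Real.dist_eq, sq_abs, ← neg_sub, neg_sq]
  · refine Finset.sum_congr rfl fun i hi => ?_
    have : i ≠ last := fun h => by simp [h, last] at hi
    simp [this]

section iterate

variable {d : ℕ} {p : Fin d → ℕ} {q : ℕ} {ν : EuclideanSpace ℝ (Fin d)} {σ : ℝ}

theorem exists_dist_fractVec_lt_of_lt_half (hd : 0 < d) (hq : 0 < q)
    (hν : ∀ i, ν i = p i / q) (hτ : covRad d (latticeNu d ν) < σ) (hσ : σ < 1 / 2) :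
    ∃ t ∈ Finset.Icc 1 (q - 1),
      dist (fractVec ((t : ℝ) • ν)) (lastBasisVector hd) < (1 + √d) * σ ∧
        0 < Int.fract ((t : ℝ) * ν ⟨d - 1, Nat.sub_lt hd one_pos⟩) := by
  set last : Fin d := ⟨d - 1, Nat.sub_lt hd one_pos⟩
  set e := lastBasisVector hd
  set x : EuclideanSpace ℝ (Fin d) := WithLp.toLp 2 fun i => if i = last then 1 - σ else σ
  obtain ⟨y, hyL, hxy⟩ := exists_dist_lt_of_covRad_lt
    (by positivity : 0 < √d / 2) (exists_mem_latticeNu_dist_le ν) hτ x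
  have hσ0 : 0 < σ := dist_nonneg.trans_lt hxy
  have hxy_apply (i : Fin d) : |x i - y i| < σ := by
    simpa [Real.dist_eq] using (PiLp.dist_apply_le x y i).trans_lt hxy
  have hy (i : Fin d) : y i ∈ Ico 0 1 := by
    have hxi : x i ∈ Icc σ (1 - σ) := by
      simp only [x]
      split_ifs <;> constructor <;> linarith
    have := abs_lt.1 (hxy_apply i)
    constructor <;> linarith [hxi.1, hxi.2]
  have hy_last : 0 < y last := by
    have := abs_lt.1 (hxy_apply last)
    simp only [x, if_true] at this
    linarith
  obtain ⟨t, htq, ht⟩ := exists_fractVec_eq_of_mem_latticeNu hq hν hyL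
  have hfy : fractVec y = y := by
    ext i
    exact Int.fract_eq_self.2 (hy i)
  rw [hfy] at ht
  have ht0 : t ≠ 0 := by
    rintro rfl
    have := congrArg (· last) ht
    simp [fractVec] at this
    linarith
  have hxe : dist x e ≤ √d * σ := by
    calc dist x e ≤ ‖(WithLp.toLp 2 fun _ => σ : EuclideanSpace ℝ (Fin d))‖ := by
          rw [dist_eq_norm]
          refine EuclideanSpace.norm_le_norm_of_forall_abs_le fun i => ?_
          by_cases hi : i = last <;> simp [x, e, lastBasisVector, last, hi]
      _ = √d * σ := by simp [EuclideanSpace.norm_const, abs_of_pos hσ0]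
  refine ⟨t, Finset.mem_Icc.2 ⟨by omega, by omega⟩, ?_, ?_⟩
  · rw [ht]
    calc dist y e ≤ dist y x + dist x e := dist_triangle _ _ _
      _ < σ + √d * σ := add_lt_add_of_lt_of_le (by rwa [dist_comm]) hxe
      _ = (1 + √d) * σ := by ring
  · have := congrArg (· last) ht
    simp only [fractVec, PiLp.smul_apply, smul_eq_mul] at this
    rwa [this]

theorem exists_dist_fractVec_le_of_half_le (hd : 0 < d) (hq : 2 ≤ q)
    (hν : ∀ i, ν i = p i / q) (hτ : covRad d (latticeNu d ν) < σ) (hσ : 1 / 2 ≤ σ) :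
    ∃ t ∈ Finset.Icc 1 (q - 1),
      dist (fractVec ((t : ℝ) • ν)) (lastBasisVector hd) ≤ (1 + √d) * σ := by
  set e := lastBasisVector hd
  set c : EuclideanSpace ℝ (Fin d) := WithLp.toLp 2 fun _ => 1 / 2
  have he (i : Fin d) : e i ∈ Icc 0 1 := by
    by_cases hi : i = ⟨d - 1, Nat.sub_lt hd one_pos⟩ <;> simp [e, lastBasisVector, hi]
  obtain ⟨y, hyL, hcy⟩ := exists_dist_lt_of_covRad_lt
    (by positivity : 0 < √d / 2) (exists_mem_latticeNu_dist_le ν) hτ c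
  rw [dist_comm] at hcy
  obtain ⟨t, htq, ht⟩ := exists_fractVec_eq_of_mem_latticeNu (by omega) hν hyL
  have hsqrt : √d / 2 ≤ √d * σ := by nlinarith [Real.sqrt_nonneg d]
  rcases Nat.eq_zero_or_pos t with rfl | ht0
  · have hfar : √d / 2 ≤ dist y c := by
      have := dist_fractVec_le y (e := WithLp.toLp 2 fun _ => 1) fun _ => by simp
      rw [← ht, show fractVec (((0 : ℕ) : ℝ) • ν) = 0 by ext; simp [fractVec], dist_zero_left,
        EuclideanSpace.norm_const] at this
      simp only [Fintype.card_fin, abs_one, mul_one] at this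
      linarith
    refine ⟨1, Finset.mem_Icc.2 ⟨le_rfl, by omega⟩, ?_⟩
    calc dist _ e ≤ √d := by simpa using dist_fractVec_le_sqrt_card _ he
      _ ≤ (1 + √d) * σ := by linarith
  · refine ⟨t, Finset.mem_Icc.2 ⟨ht0, by omega⟩, ?_⟩
    rw [ht]
    calc dist (fractVec y) e ≤ √d / 2 + dist y c := by simpa [c] using dist_fractVec_le y he
      _ ≤ (1 + √d) * σ := by linarith

theorem exists_dist_fractVec_le (hd : 0 < d) (hq : 2 ≤ q) (hν : ∀ i, ν i = p i / q)
    (hτ : covRad d (latticeNu d ν) < σ) :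
    ∃ t ∈ Finset.Icc 1 (q - 1),
      dist (fractVec ((t : ℝ) • ν)) (lastBasisVector hd) ≤ (1 + √d) * σ := by
  rcases lt_or_ge σ (1 / 2) with hσ | hσ
  · obtain ⟨t, ht, hlt, -⟩ := exists_dist_fractVec_lt_of_lt_half hd (by omega) hν hτ hσ
    exact ⟨t, ht, hlt.le⟩
  · exact exists_dist_fractVec_le_of_half_le hd hq hν hτ hσ

end iterate

/-- Proposition 2: some iterate `ξ = tν mod 1` has `N(ξ) ≤ (1+√d)·τ(L_ν)`, and if
`τ(L_ν) < 1/2` it can be chosen with positive rounding effect. -/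
theorem exists_iterate_NFn (d : ℕ) (hd : 2 ≤ d) (p : Fin d → ℕ) (q : ℕ)
    (hp : ∀ i, 0 < p i) (hq : ∀ i, p i < q)
    (ν : EuclideanSpace ℝ (Fin d)) (hν : ∀ i, ν i = (p i : ℝ) / (q : ℝ)) :
    (∃ t : ℕ, 1 ≤ t ∧ t ≤ q - 1 ∧
       NFn d (by omega) (WithLp.toLp 2 (fun i => Int.fract ((t : ℝ) * ν i)))
         ≤ (1 + Real.sqrt d) * covRad d (latticeNu d ν)) ∧
    (covRad d (latticeNu d ν) < 1 / 2 →
      ∃ t : ℕ, 1 ≤ t ∧ t ≤ q - 1 ∧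
        NFn d (by omega) (WithLp.toLp 2 (fun i => Int.fract ((t : ℝ) * ν i)))
          ≤ (1 + Real.sqrt d) * covRad d (latticeNu d ν) ∧
        0 < Int.fract ((t : ℝ) * ((p ⟨d - 1, by omega⟩ : ℝ) / (q : ℝ)))) := by
  have hd0 : 0 < d := by omega
  have hq2 : 2 ≤ q := by have := hp ⟨0, hd0⟩; have := hq ⟨0, hd0⟩; omega
  set τ := covRad d (latticeNu d ν)
  have hg : Tendsto (fun σ => (1 + √d) * σ) (𝓝[>] τ) (𝓝 ((1 + √d) * τ)) :=
    ((continuous_const.mul continuous_id).tendsto τ).mono_left nhdsWithin_le_nhds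
  simp only [NFn_eq_dist hd0, ← hν]
  refine ⟨?_, fun hτ => ?_⟩
  · obtain ⟨t, ht, hle⟩ := Finset.exists_le_of_tendsto hg <|
      eventually_nhdsWithin_of_forall fun σ hσ => exists_dist_fractVec_le hd0 hq2 hν hσ
    exact ⟨t, (Finset.mem_Icc.1 ht).1, (Finset.mem_Icc.1 ht).2, hle⟩
  · have hev : ∀ᶠ σ in 𝓝[>] τ, ∃ t ∈ (Finset.Icc 1 (q - 1)).filter
        (fun t : ℕ => 0 < Int.fract ((t : ℝ) * ν ⟨d - 1, by omega⟩)),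
        dist (fractVec ((t : ℝ) • ν)) (lastBasisVector hd0) ≤ (1 + √d) * σ := by
      filter_upwards [Ioo_mem_nhdsGT hτ] with σ hσ
      obtain ⟨t, ht, hlt, hpos⟩ := exists_dist_fractVec_lt_of_lt_half hd0 (by omega) hν hσ.1 hσ.2
      exact ⟨t, Finset.mem_filter.2 ⟨ht, hpos⟩, hlt.le⟩
    obtain ⟨t, ht, hle⟩ := Finset.exists_le_of_tendsto hg hev
    obtain ⟨ht, hpos⟩ := Finset.mem_filter.1 ht
    exact ⟨t, (Finset.mem_Icc.1 ht).1, (Finset.mem_Icc.1 ht).2, hle, hpos⟩
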